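/- arXiv:1209.1128 — 3 statements merged into one kernel-verified Lean document; each statement's English description precedes it below -/
import Mathlib

section
/- Let H be a finite family of functions from a set Y to a set Z of size M, and suppose the distribution of (h, h(y)) for h ∈ H and y ∈ Y chosen independently and uniformly at random is within statistical distance δ² of the uniform distribution on H × Z. Then the fraction of h ∈ H with |h(Y)| ≤ M(1 − δ) is at most δ. -/
/-!
Let `B` be the set of `h` whose image is small and let `T` be the union of the graphs
`{h} × h(Y)` over `h ∈ B`. The pair `(h, h(y))` lands in `T` exactly when `h ∈ B`, so `T` has
probability `|B|/|H|` under the real distribution but at most `(1 - δ)|B|/|H|` under the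
uniform one. The gap `δ|B|/|H|` is at most `δ²`, whence `|B|/|H| ≤ δ`.
-/

open Finset

section Graph

open scoped Classical

variable {H Y Z : Type*}

noncomputable def graphOn [Fintype Y] (F : H → Y → Z) (B : Finset H) : Finset (H × Z) :=
  B.biUnion fun h => {h} ×ˢ univ.image (F h)

theorem filter_mem_graphOn [Fintype H] [Fintype Y] (F : H → Y → Z) (B : Finset H) :
    univ.filter (fun p : H × Y => (p.1, F p.1 p.2) ∈ graphOn F B) = B ×ˢ univ := by
  ext ⟨h, y⟩
  simp [graphOn]

theorem card_filter_mem_graphOn_div [Fintype H] [Fintype Y] [Nonempty Y] (F : H → Y → Z)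
    (B : Finset H) :
    ((univ.filter (fun p : H × Y => (p.1, F p.1 p.2) ∈ graphOn F B)).card : ℝ) /
        (Fintype.card H * Fintype.card Y) = B.card / Fintype.card H := by
  have hY : (Fintype.card Y : ℝ) ≠ 0 := by positivity
  rw [filter_mem_graphOn, card_product, card_univ, Nat.cast_mul, mul_div_mul_right _ _ hY]

theorem card_graphOn_le [Fintype Y] (F : H → Y → Z) (B : Finset H) :
    (graphOn F B).card ≤ ∑ h ∈ B, (univ.image (F h)).card :=
  card_biUnion_le.trans_eq <| sum_congr rfl fun _ _ => by
    rw [card_product, card_singleton, one_mul]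

theorem card_graphOn_div_le [Fintype H] [Fintype Y] [Fintype Z] [Nonempty Z] (F : H → Y → Z)
    (B : Finset H) {c : ℝ}
    (hB : ∀ h ∈ B, ((univ.image (F h)).card : ℝ) ≤ Fintype.card Z * c) :
    ((graphOn F B).card : ℝ) / (Fintype.card H * Fintype.card Z) ≤
      B.card / Fintype.card H * c := by
  have hZ : (0 : ℝ) < Fintype.card Z := by positivity
  have hsum : ((graphOn F B).card : ℝ) ≤ B.card * (Fintype.card Z * c) :=
    calc ((graphOn F B).card : ℝ) ≤ ∑ h ∈ B, ((univ.image (F h)).card : ℝ) := by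
          exact_mod_cast card_graphOn_le F B
      _ ≤ ∑ _h ∈ B, (Fintype.card Z * c) := sum_le_sum hB
      _ = B.card * (Fintype.card Z * c) := by rw [sum_const, nsmul_eq_mul]
  rw [div_mul_eq_mul_div, mul_comm, ← div_div]
  gcongr
  rw [div_le_iff₀ hZ]
  linarith

end Graph

theorem le_of_sub_le_sq {p q δ : ℝ} (hδ : 0 < δ) (hq : q ≤ p * (1 - δ))
    (hpq : p - q ≤ δ ^ 2) :
    p ≤ δ :=
  le_of_mul_le_mul_right (by nlinarith) hδ

open scoped Classical in
theorem stmt_2_general {H Y Z : Type*} [Fintype H] [Fintype Y] [Fintype Z]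
    [Nonempty Y]
    (F : H → Y → Z) (M : ℕ) (hM : Fintype.card Z = M)
    (δ : ℝ) (hδ : 0 < δ)
    (hdist : ∀ T : Finset (H × Z),
      |((Finset.univ.filter (fun p : H × Y => (p.1, F p.1 p.2) ∈ T)).card : ℝ) /
          (Fintype.card H * Fintype.card Y)
        - (T.card : ℝ) / (Fintype.card H * M)| ≤ δ ^ 2) :
    ((Finset.univ.filter
        (fun h : H => ((Finset.univ.image (F h)).card : ℝ) ≤ M * (1 - δ))).card : ℝ)
      ≤ δ * Fintype.card H := by
  rcases isEmpty_or_nonempty H with hH | hH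
  · simp
  have hZ : Nonempty Z := ⟨F (Classical.arbitrary H) (Classical.arbitrary Y)⟩
  subst hM
  set B := univ.filter fun h : H => ((univ.image (F h)).card : ℝ) ≤ Fintype.card Z * (1 - δ)
  have hgap := (abs_le.mp (hdist (graphOn F B))).2
  rw [card_filter_mem_graphOn_div] at hgap
  have hsmall := card_graphOn_div_le F B fun h hh => (mem_filter.mp hh).2
  have hfrac := le_of_sub_le_sq hδ hsmall hgap
  rwa [div_le_iff₀ (by positivity)] at hfrac

open scoped Classical in
/-- If the distribution of `(h, h(y))` for uniform `(h, y)` is within statistical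
distance `δ²` of uniform on `H × Z`, then the fraction of `h` whose image has size at
most `M(1-δ)` is at most `δ`. -/
theorem stmt_2 {H Y Z : Type*} [Fintype H] [Fintype Y] [Fintype Z]
    [Nonempty H] [Nonempty Y]
    (F : H → Y → Z) (M : ℕ) (hM : Fintype.card Z = M)
    (δ : ℝ) (hδ : 0 < δ)
    (hdist : ∀ T : Finset (H × Z),
      |((Finset.univ.filter (fun p : H × Y => (p.1, F p.1 p.2) ∈ T)).card : ℝ) /
          (Fintype.card H * Fintype.card Y)
        - (T.card : ℝ) / (Fintype.card H * M)| ≤ δ ^ 2) :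
    ((Finset.univ.filter
        (fun h : H => ((Finset.univ.image (F h)).card : ℝ) ≤ M * (1 - δ))).card : ℝ)
      ≤ δ * Fintype.card H :=
  stmt_2_general F M hM δ hδ hdist
end

section
/- For any t ≥ 1, the point (R₁, ..., R_t) with R_i = ((t+2−i)/(t+1))·H(1/(t+2−i)) for 1 ≤ i ≤ t−1 and R_t = 2/(t+1) lies in the capacity region C_t with corresponding weight vector (p₁, ..., p_{t−1}) = (1/(t+1), 1/t, ..., 1/3), and R₁ + ... + R_t = log₂(t+1). -/
/-!
With `p_j = 1/(t+2-j)` the factors `1 - p_j = (t+1-j)/(t+2-j)` telescope, so the prefix products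
are `(t+2-i)/(t+1)` and every constraint of the region holds with equality. Writing
`F x = x log₂ x`, the identity `n H(1/n) = F n - F (n-1)` gives `(t+1) R_i = F(t+2-i) - F(t+1-i)`,
also for `i = t` since `F 2 - F 1 = 2`; the rates therefore telescope to `F(t+1)/(t+1) = log₂(t+1)`.
-/

open Finset

/-- The binary entropy function (base 2). -/
noncomputable def binH (p : ℝ) : ℝ := -(p * Real.logb 2 p) - (1 - p) * Real.logb 2 (1 - p)

lemma mul_binH_one_div (n : ℝ) :
    n * binH (1 / n) = n * Real.logb 2 n - (n - 1) * Real.logb 2 (n - 1) := by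
  rcases eq_or_ne n 0 with rfl | hn0
  · simp [binH]
  rcases eq_or_ne n 1 with rfl | hn1
  · simp [binH]
  have hsub : 1 - 1 / n = (n - 1) / n := by field_simp
  rw [binH, hsub, Real.logb_div one_ne_zero hn0, Real.logb_div (sub_ne_zero.2 hn1) hn0,
    Real.logb_one]
  field_simp
  ring

lemma mul_prod_Icc_one_sub_one_div {K : Type*} [Field K] (a : K) (m : ℕ)
    (h : ∀ j ∈ Icc 1 m, a - j ≠ 0) :
    (a - 1) * ∏ j ∈ Icc 1 m, (1 - 1 / (a - j)) = a - 1 - m := by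
  induction m with
  | zero => simp
  | succ m ih =>
    have hm : a - (m + 1 : ℕ) ≠ 0 := h (m + 1) (by simp)
    rw [prod_Icc_succ_top (by omega), ← mul_assoc,
      ih fun j hj => h j (Icc_subset_Icc_right m.le_succ hj)]
    push_cast at hm ⊢
    field_simp
    ring

section RatePoint

variable {t : ℕ} {R p : ℕ → ℝ}

lemma three_le_add_two_sub {j : ℕ} (hj1 : 1 ≤ j) (hj : j ≤ t - 1) : (3 : ℝ) ≤ t + 2 - j := by
  have : (j : ℝ) + 1 ≤ t := by exact_mod_cast (by omega : j + 1 ≤ t)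
  linarith

lemma prod_Icc_one_sub_weight
    (hp : ∀ j, 1 ≤ j → j ≤ t - 1 → p j = 1 / ((t : ℝ) + 2 - j)) {m : ℕ} (hm : m ≤ t - 1) :
    ∏ j ∈ Icc 1 m, (1 - p j) = ((t : ℝ) + 1 - m) / ((t : ℝ) + 1) := by
  have hweights : ∏ j ∈ Icc 1 m, (1 - p j) = ∏ j ∈ Icc 1 m, (1 - 1 / ((t + 2 : ℝ) - j)) :=
    prod_congr rfl fun j hj => by
      rw [mem_Icc] at hj
      rw [hp j hj.1 (hj.2.trans hm)]
  have key := mul_prod_Icc_one_sub_one_div ((t : ℝ) + 2) m fun j hj => by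
    have := three_le_add_two_sub (t := t) (mem_Icc.1 hj).1 ((mem_Icc.1 hj).2.trans hm)
    linarith
  rw [hweights, eq_div_iff (by positivity), mul_comm]
  linear_combination key

lemma mul_rate_eq
    (hR : ∀ i, 1 ≤ i → i ≤ t - 1 →
      R i = (((t : ℝ) + 2 - i) / ((t : ℝ) + 1)) * binH (1 / ((t : ℝ) + 2 - i)))
    (hRt : R t = 2 / ((t : ℝ) + 1)) {i : ℕ} (hi : i ∈ Icc 1 t) :
    ((t : ℝ) + 1) * R i = ((t : ℝ) + 2 - i) * Real.logb 2 ((t : ℝ) + 2 - i)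
      - ((t : ℝ) + 1 - i) * Real.logb 2 ((t : ℝ) + 1 - i) := by
  rw [mem_Icc] at hi
  rcases (by omega : i ≤ t - 1 ∨ i = t) with hle | rfl
  · rw [hR i hi.1 hle, ← mul_assoc, mul_div_cancel₀ _ (by positivity), mul_binH_one_div]
    ring_nf
  · rw [hRt, mul_div_cancel₀ _ (by positivity)]
    norm_num [Real.logb_self_eq_one]

lemma sum_Icc_rate (ht : 1 ≤ t)
    (hR : ∀ i, 1 ≤ i → i ≤ t - 1 →
      R i = (((t : ℝ) + 2 - i) / ((t : ℝ) + 1)) * binH (1 / ((t : ℝ) + 2 - i)))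
    (hRt : R t = 2 / ((t : ℝ) + 1)) :
    ∑ i ∈ Icc 1 t, R i = Real.logb 2 ((t : ℝ) + 1) := by
  set F : ℕ → ℝ := fun k => -(((t : ℝ) + 2 - k) * Real.logb 2 ((t : ℝ) + 2 - k))
  have htelescope : ((t : ℝ) + 1) * ∑ i ∈ Icc 1 t, R i = F (t + 1) - F 1 := by
    rw [mul_sum, ← sum_Icc_sub ht F]
    refine sum_congr rfl fun i hi => ?_
    rw [mul_rate_eq hR hRt hi]
    simp only [F]
    push_cast
    ring_nf
  simp only [F] at htelescope
  push_cast at htelescope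
  rw [← mul_right_inj' (by positivity : (t : ℝ) + 1 ≠ 0), htelescope,
    show (t : ℝ) + 2 - (t + 1) = 1 by ring, show (t : ℝ) + 2 - 1 = t + 1 by ring, Real.logb_one]
  ring

end RatePoint

/-- The point `R_i = ((t+2-i)/(t+1))·H(1/(t+2-i))` for `i ≤ t-1`, `R_t = 2/(t+1)` lies
in the capacity region `C_t` with weight vector `p_j = 1/(t+2-j)`, and its total rate is
`log₂(t+1)`. -/
theorem stmt_9 (t : ℕ) (ht : 1 ≤ t) (R p : ℕ → ℝ)
    (hR : ∀ i, 1 ≤ i → i ≤ t - 1 →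
      R i = (((t : ℝ) + 2 - i) / ((t : ℝ) + 1)) * binH (1 / ((t : ℝ) + 2 - i)))
    (hRt : R t = 2 / ((t : ℝ) + 1))
    (hp : ∀ j, 1 ≤ j → j ≤ t - 1 → p j = 1 / ((t : ℝ) + 2 - j)) :
    (∀ j, 1 ≤ j → j ≤ t - 1 → 0 ≤ p j ∧ p j ≤ 1 / 2) ∧
    (∀ i, 1 ≤ i → i ≤ t - 1 →
      R i ≤ (∏ j ∈ Finset.Icc 1 (i - 1), (1 - p j)) * binH (p i)) ∧
    R t ≤ (∏ j ∈ Finset.Icc 1 (t - 1), (1 - p j)) ∧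
    (∑ i ∈ Finset.Icc 1 t, R i) = Real.logb 2 ((t : ℝ) + 1) := by
  refine ⟨fun j hj1 hj => ?_, fun i hi1 hi => ?_, ?_, sum_Icc_rate ht hR hRt⟩
  · have h3 := three_le_add_two_sub hj1 hj
    rw [hp j hj1 hj]
    exact ⟨by positivity, by rw [div_le_div_iff₀ (by linarith) two_pos]; linarith⟩
  · rw [hR i hi1 hi, prod_Icc_one_sub_weight hp (by omega), hp i hi1 hi, Nat.cast_sub hi1]
    exact le_of_eq (by ring)
  · rw [hRt, prod_Icc_one_sub_weight hp le_rfl, Nat.cast_sub ht]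
    exact le_of_eq (by ring)
end

section
/- For any 0 ≤ p₁, ..., p_{t−1} ≤ 1/2, the sum H(p₁) + ∑_{i=2}^{t−1} ∏_{j=1}^{i−1}(1−p_j)·H(p_i) + ∏_{j=1}^{t−1}(1−p_j) is at most log₂(t+1). -/
/-
Peeling off the first write gives the recursion `R_{t} = H(p₁) + (1 - p₁) R_{t-1}` for the sum
rate, with `R_1 = 1`. Gibbs' inequality against the distribution `(1/(m+1), m/(m+1))` shows that
`H(p) + (1 - p) log₂ m ≤ log₂ (m + 1)`, so by induction `R_t ≤ log₂ (t + 1)`.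
-/

open Finset

@[to_additive sum_Icc_one_eq_sum_range]
lemma prod_Icc_one_eq_prod_range {M : Type*} [CommMonoid M] (f : ℕ → M) (n : ℕ) :
    ∏ i ∈ Icc 1 n, f i = ∏ i ∈ range n, f (i + 1) := by
  rw [← Ico_add_one_right_eq_Icc, prod_Ico_eq_prod_range, Nat.add_sub_cancel]
  simp only [add_comm]

lemma mul_log_sub_log_le_sub {p a : ℝ} (hp : 0 ≤ p) (ha : 0 < a) :
    p * (Real.log a - Real.log p) ≤ a - p := by
  rcases hp.eq_or_lt with rfl | hp
  · simpa using ha.le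
  · calc p * (Real.log a - Real.log p) = p * Real.log (a / p) := by
          rw [Real.log_div ha.ne' hp.ne']
      _ ≤ p * (a / p - 1) := by gcongr; exact Real.log_le_sub_one_of_pos (by positivity)
      _ = a - p := by field_simp

lemma binH_add_mul_logb_le {p m : ℝ} (hp₀ : 0 ≤ p) (hp₁ : p ≤ 1) (hm : 0 < m) :
    binH p + (1 - p) * Real.logb 2 m ≤ Real.logb 2 (m + 1) := by
  have hm₁ : 0 < m + 1 := by linarith
  have h₁ := mul_log_sub_log_le_sub hp₀ (inv_pos.2 hm₁)
  have h₂ := mul_log_sub_log_le_sub (sub_nonneg.2 hp₁) (div_pos hm hm₁)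
  rw [Real.log_inv] at h₁
  rw [Real.log_div hm.ne' hm₁.ne'] at h₂
  have hsum : (m + 1)⁻¹ + m / (m + 1) = 1 := by field_simp; ring
  have hlog : -(p * Real.log p) - (1 - p) * Real.log (1 - p) + (1 - p) * Real.log m
      ≤ Real.log (m + 1) := by linarith
  calc binH p + (1 - p) * Real.logb 2 m
      = (-(p * Real.log p) - (1 - p) * Real.log (1 - p) + (1 - p) * Real.log m) / Real.log 2 := by
        simp only [binH, Real.logb]; ring
    _ ≤ Real.log (m + 1) / Real.log 2 := by gcongr
    _ = Real.logb 2 (m + 1) := rfl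

/-- The sum rate of an `(n + 1)`-write WOM code, indexed from `0`: `q j` is the paper's `p_{j+1}`
and `n = t - 1`. -/
noncomputable def womSumRate (q : ℕ → ℝ) (n : ℕ) : ℝ :=
  ∑ i ∈ range n, (∏ j ∈ range i, (1 - q j)) * binH (q i) + ∏ j ∈ range n, (1 - q j)

lemma womSumRate_zero (q : ℕ → ℝ) : womSumRate q 0 = 1 := by
  simp [womSumRate]

lemma womSumRate_succ (q : ℕ → ℝ) (n : ℕ) :
    womSumRate q (n + 1) = binH (q 0) + (1 - q 0) * womSumRate (fun j ↦ q (j + 1)) n := by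
  have hterm (i : ℕ) : (∏ j ∈ range (i + 1), (1 - q j)) * binH (q (i + 1)) =
      (1 - q 0) * ((∏ j ∈ range i, (1 - q (j + 1))) * binH (q (i + 1))) := by
    rw [prod_range_succ']; ring
  rw [womSumRate, womSumRate, sum_range_succ', prod_range_succ', mul_add, mul_sum]
  simp only [hterm, prod_range_zero]
  ring

lemma womSumRate_le_logb (q : ℕ → ℝ) (n : ℕ) (hq : ∀ j < n, 0 ≤ q j ∧ q j ≤ 1) :
    womSumRate q n ≤ Real.logb 2 (n + 2) := by
  induction n generalizing q with
  | zero => simp [womSumRate_zero]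
  | succ n ih =>
    obtain ⟨hq₀, hq₁⟩ := hq 0 n.succ_pos
    have ih' := ih (fun j ↦ q (j + 1)) fun j hj ↦ hq (j + 1) (by omega)
    calc womSumRate q (n + 1)
        = binH (q 0) + (1 - q 0) * womSumRate (fun j ↦ q (j + 1)) n := womSumRate_succ q n
      _ ≤ binH (q 0) + (1 - q 0) * Real.logb 2 (n + 2) := by gcongr
      _ ≤ Real.logb 2 (n + 2 + 1) := binH_add_mul_logb_le hq₀ hq₁ (by positivity)
      _ = Real.logb 2 ((n + 1 : ℕ) + 2) := by push_cast; ring_nf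

lemma womSumRate_shift_eq {p : ℕ → ℝ} {n : ℕ} (hn : 1 ≤ n) :
    binH (p 1) + (∑ i ∈ Icc 2 n, (∏ j ∈ Icc 1 (i - 1), (1 - p j)) * binH (p i)) +
      ∏ j ∈ Icc 1 n, (1 - p j) = womSumRate (fun j ↦ p (j + 1)) n := by
  have hfirst : binH (p 1) + ∑ i ∈ Icc 2 n, (∏ j ∈ Icc 1 (i - 1), (1 - p j)) * binH (p i) =
      ∑ i ∈ Icc 1 n, (∏ j ∈ Icc 1 (i - 1), (1 - p j)) * binH (p i) := by
    rw [← insert_Icc_add_one_left_eq_Icc hn, sum_insert (by simp)]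
    simp
  rw [hfirst, womSumRate, sum_Icc_one_eq_sum_range]
  simp only [prod_Icc_one_eq_prod_range, Nat.add_sub_cancel]

/-- The maximal total rate over the capacity region of `t`-write binary WOM codes is
`log₂(t+1)`: for any `0 ≤ p₁,…,p_{t-1} ≤ 1/2`,
`H(p₁) + ∑_{i=2}^{t-1} ∏_{j<i}(1-p_j)·H(p_i) + ∏_{j=1}^{t-1}(1-p_j) ≤ log₂(t+1)`. -/
theorem stmt_10 (t : ℕ) (ht : 2 ≤ t) (p : ℕ → ℝ)
    (hp : ∀ j, 1 ≤ j → j ≤ t - 1 → 0 ≤ p j ∧ p j ≤ 1 / 2) :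
    binH (p 1) +
      (∑ i ∈ Finset.Icc 2 (t - 1), (∏ j ∈ Finset.Icc 1 (i - 1), (1 - p j)) * binH (p i)) +
      (∏ j ∈ Finset.Icc 1 (t - 1), (1 - p j)) ≤ Real.logb 2 ((t : ℝ) + 1) := by
  have hq : ∀ j < t - 1, 0 ≤ p (j + 1) ∧ p (j + 1) ≤ 1 := fun j hj ↦
    have h := hp (j + 1) (by omega) (by omega)
    ⟨h.1, h.2.trans (by norm_num)⟩
  calc _ = womSumRate (fun j ↦ p (j + 1)) (t - 1) := womSumRate_shift_eq (by omega)
    _ ≤ Real.logb 2 ((t - 1 : ℕ) + 2) := womSumRate_le_logb _ _ hq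
    _ = Real.logb 2 ((t : ℝ) + 1) := by
      rw [Nat.cast_sub (by omega : 1 ≤ t)]
      ring_nf
end
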